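/- Let n ≥ 1 and set ξ_0 = 1, ξ_{n+1} = −1, and ξ_k = cos((2k−1)π/(2n+1)) for 1 ≤ k ≤ n, so that 1 = ξ_0 > ξ_1 > ⋯ > ξ_n > ξ_{n+1} = −1. Then for each 1 ≤ k ≤ n the polynomial S_{2n} has exactly one zero in the open interval (ξ_{k+1}, ξ_k); these n zeroes together with x = 1 exhaust all the zeroes of S_{2n}, and all zeroes of S_{2n} are simple. -/

import Mathlib

/-!
Put `θ_k = (2k − 1)π/(2n + 1)`, so `ξ_k = cos θ_k` for `1 ≤ k ≤ n + 1` (as `θ_{n+1} = π`).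
From `U_m(cos θ) sin θ = sin((m + 1)θ)` and `(n + 1)θ_k + nθ_k = (2k − 1)π`, one gets
`S_{2n}(cos θ_k) sin θ_k = (−1)^k · 4 cos³(θ_k/2)`, while `S_{2n}(−1) = (−1)^{n+1}(4n + 2)`.
So `S_{2n}` alternates in sign along `ξ_1 > ⋯ > ξ_{n+1}` and the intermediate value theorem gives
a zero in each `(ξ_{k+1}, ξ_k)`. Together with the zero `x = 1` these are `n + 1` distinct zeroes
of a nonzero polynomial of degree at most `n + 1`: they are all of its roots, each simple.
-/

open Polynomial Polynomial.Chebyshev Real Set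

theorem Polynomial.eval_derivative_ne_zero_of_nodup_roots {R : Type*} [CommRing R] [IsDomain R]
    {p : R[X]} (hp : p ≠ 0) (hnodup : p.roots.Nodup) {x : R} (hx : p.IsRoot x) :
    p.derivative.eval x ≠ 0 := by
  classical
  intro hdx
  have hmult : 1 < p.rootMultiplicity x :=
    (one_lt_rootMultiplicity_iff_isRoot hp).mpr ⟨hx, hdx⟩
  have hcount := Multiset.nodup_iff_count_le_one.mp hnodup x
  rw [count_roots] at hcount
  omega

theorem exists_mem_Ioo_eq_zero_of_alternating {α : Type*} [ConditionallyCompleteLinearOrder α]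
    [TopologicalSpace α] [OrderTopology α] [DenselyOrdered α] {f : α → ℝ} {a b : α} {k : ℕ}
    (hab : a ≤ b) (hf : ContinuousOn f (Icc a b)) (ha : 0 < (-1) ^ (k + 1) * f a)
    (hb : 0 < (-1) ^ k * f b) : ∃ x ∈ Ioo a b, f x = 0 := by
  rw [pow_succ] at ha
  rcases neg_one_pow_eq_or ℝ k with h | h <;> rw [h] at ha hb
  · exact intermediate_value_Ioo hab hf ⟨by linarith, by linarith⟩
  · exact intermediate_value_Ioo' hab hf ⟨by linarith, by linarith⟩

theorem AntitoneOn.eq_of_mem_Ioc_succ {α : Type*} [LinearOrder α] {ξ : ℕ → α} {N j k : ℕ}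
    (hξ : AntitoneOn ξ (Iic N)) (hj : j < N) (hk : k < N) {x : α}
    (hxj : x ∈ Ioc (ξ (j + 1)) (ξ j)) (hxk : x ∈ Ioc (ξ (k + 1)) (ξ k)) : j = k := by
  have key : ∀ {i l : ℕ}, i < l → l < N → x ∈ Ioc (ξ (i + 1)) (ξ i) → x ∉ Ioc (ξ (l + 1)) (ξ l) :=
    fun hil hl hxi hxl =>
      (hxi.1.trans_le (hxl.2.trans (hξ (mem_Iic.2 (by omega)) (mem_Iic.2 hl.le) hil))).false
  rcases lt_trichotomy j k with h | h | h
  · exact absurd hxk (key h hk hxj)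
  · exact h
  · exact absurd hxj (key h hj hxk)

section SignAlternation

variable {p : ℝ[X]} {ξ : ℕ → ℝ} {n : ℕ}

theorem roots_eq_image_of_mem_Ioc (hdeg : p.natDegree ≤ n + 1) (hp : p ≠ 0)
    (hξ : AntitoneOn ξ (Iic (n + 1))) {ρ : ℕ → ℝ}
    (hρ_mem : ∀ k ≤ n, ρ k ∈ Ioc (ξ (k + 1)) (ξ k)) (hρ_zero : ∀ k ≤ n, p.eval (ρ k) = 0) :
    p.roots = ((Finset.Iic n).image ρ).val := by
  have hρ_inj : InjOn ρ (Finset.Iic n) := fun j hj k hk hjk => by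
    rw [Finset.coe_Iic] at hj hk
    exact hξ.eq_of_mem_Ioc_succ (Nat.lt_succ_of_le hj) (Nat.lt_succ_of_le hk) (hρ_mem j hj)
      (hjk ▸ hρ_mem k hk)
  refine roots_eq_of_natDegree_le_card_of_ne_zero ?_ ?_ hp
  · simpa only [Finset.forall_mem_image, Finset.mem_Iic] using hρ_zero
  · rwa [Finset.card_image_of_injOn hρ_inj, Nat.card_Iic]

theorem exists_zeroes_of_sign_alternation (hξ : StrictAntiOn ξ (Iic (n + 1)))
    (h0 : p.eval (ξ 0) = 0) (hsign : ∀ k, 1 ≤ k → k ≤ n + 1 → 0 < (-1) ^ k * p.eval (ξ k)) :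
    ∃ ρ : ℕ → ℝ, ρ 0 = ξ 0 ∧ (∀ k, 1 ≤ k → k ≤ n → ρ k ∈ Ioo (ξ (k + 1)) (ξ k)) ∧
      ∀ k ≤ n, p.eval (ρ k) = 0 := by
  have hzero : ∀ k, 1 ≤ k → k ≤ n → ∃ x ∈ Ioo (ξ (k + 1)) (ξ k), p.eval x = 0 :=
    fun k hk hkn => exists_mem_Ioo_eq_zero_of_alternating
      (hξ (mem_Iic.2 (by omega)) (mem_Iic.2 (by omega)) k.lt_succ_self).le
      p.continuous.continuousOn (hsign (k + 1) (by omega) (by omega)) (hsign k hk (by omega))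
  choose! r hr_mem hr_zero using hzero
  refine ⟨fun k => if k = 0 then ξ 0 else r k, rfl, fun k hk hkn => ?_, fun k hkn => ?_⟩
  · simpa [Nat.one_le_iff_ne_zero.mp hk] using hr_mem k hk hkn
  · rcases Nat.eq_zero_or_pos k with rfl | hk
    · simpa using h0
    · simpa [hk.ne'] using hr_zero k hk hkn

theorem zeroes_interlace_of_sign_alternation (hdeg : p.natDegree ≤ n + 1)
    (hξ : StrictAntiOn ξ (Iic (n + 1))) (h0 : p.eval (ξ 0) = 0)
    (hsign : ∀ k, 1 ≤ k → k ≤ n + 1 → 0 < (-1) ^ k * p.eval (ξ k)) :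
    (∀ k, 1 ≤ k → k ≤ n → ∃! x, x ∈ Ioo (ξ (k + 1)) (ξ k) ∧ p.eval x = 0) ∧
    (∀ x, p.eval x = 0 → x = ξ 0 ∨ ∃ k, 1 ≤ k ∧ k ≤ n ∧ x ∈ Ioo (ξ (k + 1)) (ξ k)) ∧
    (∀ x, p.eval x = 0 → p.derivative.eval x ≠ 0) := by
  have hp : p ≠ 0 := fun h => by simpa [h] using hsign 1 le_rfl (by omega)
  obtain ⟨ρ, hρ0, hρ_mem, hρ_zero⟩ := exists_zeroes_of_sign_alternation hξ h0 hsign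
  have hρ_Ioc : ∀ k ≤ n, ρ k ∈ Ioc (ξ (k + 1)) (ξ k) := fun k hkn => by
    rcases Nat.eq_zero_or_pos k with rfl | hk
    · rw [hρ0]
      exact ⟨hξ (mem_Iic.2 (Nat.zero_le _)) (mem_Iic.2 (by omega)) Nat.zero_lt_one, le_rfl⟩
    · exact Ioo_subset_Ioc_self (hρ_mem k hk hkn)
  have hroots := roots_eq_image_of_mem_Ioc hdeg hp hξ.antitoneOn hρ_Ioc hρ_zero
  have hzero_eq : ∀ x, p.eval x = 0 → ∃ k ≤ n, ρ k = x := fun x hx => by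
    have hx_mem : x ∈ p.roots := (mem_roots hp).mpr hx
    simpa only [hroots, Finset.mem_val, Finset.mem_image, Finset.mem_Iic] using hx_mem
  refine ⟨fun k hk hkn => ⟨ρ k, ⟨hρ_mem k hk hkn, hρ_zero k hkn⟩, ?_⟩, fun x hx => ?_,
    fun x hx => eval_derivative_ne_zero_of_nodup_roots hp (hroots ▸ Finset.nodup _) hx⟩
  · rintro x ⟨hx_mem, hx⟩
    obtain ⟨j, hjn, rfl⟩ := hzero_eq x hx
    rw [hξ.antitoneOn.eq_of_mem_Ioc_succ (Nat.lt_succ_of_le hjn) (Nat.lt_succ_of_le hkn)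
      (hρ_Ioc j hjn) (Ioo_subset_Ioc_self hx_mem)]
  · obtain ⟨k, hkn, rfl⟩ := hzero_eq x hx
    rcases Nat.eq_zero_or_pos k with rfl | hk
    · exact Or.inl hρ0
    · exact Or.inr ⟨k, hk, hkn, hρ_mem k hk hkn⟩

end SignAlternation

/-- `S_{2n}(x) = (2nx + x + 2n − 1)Uₙ(x) − (2nx + 3x + 2n + 1)U_{n-1}(x)`. -/
noncomputable def S2n (n : ℕ) : Polynomial ℝ :=
  (Polynomial.C (2 * (n : ℝ) + 1) * Polynomial.X + Polynomial.C (2 * (n : ℝ) - 1)) *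
      U ℝ (n : ℤ) -
    (Polynomial.C (2 * (n : ℝ) + 3) * Polynomial.X + Polynomial.C (2 * (n : ℝ) + 1)) *
      U ℝ ((n : ℤ) - 1)

noncomputable def nodeAngle (n k : ℕ) : ℝ := (2 * k - 1) * π / (2 * n + 1)

theorem nodeAngle_pos {n k : ℕ} (hk : 1 ≤ k) : 0 < nodeAngle n k := by
  have : (1 : ℝ) ≤ k := by exact_mod_cast hk
  exact div_pos (mul_pos (by linarith) pi_pos) (by positivity)

theorem nodeAngle_lt_pi {n k : ℕ} (hk : k ≤ n) : nodeAngle n k < π := by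
  have : (k : ℝ) ≤ n := by exact_mod_cast hk
  rw [nodeAngle, div_lt_iff₀ (by positivity)]
  nlinarith [pi_pos]

theorem nodeAngle_succ_self (n : ℕ) : nodeAngle n (n + 1) = π := by
  rw [nodeAngle]
  field_simp
  push_cast
  ring

theorem nodeAngle_strictMono (n : ℕ) : StrictMono (nodeAngle n) := by
  intro j k hjk
  have : (j : ℝ) < k := by exact_mod_cast hjk
  unfold nodeAngle
  gcongr

theorem S2n_eval_cos_mul_sin (n : ℕ) (θ : ℝ) :
    (S2n n).eval (cos θ) * sin θ =
      ((2 * n + 1) * cos θ + (2 * n - 1)) * sin ((n + 1) * θ) -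
        ((2 * n + 3) * cos θ + (2 * n + 1)) * sin (n * θ) := by
  have hUn := U_real_cos θ n
  have hUn' := U_real_cos θ (n - 1)
  push_cast at hUn hUn'
  rw [sub_add_cancel] at hUn'
  simp only [S2n, eval_sub, eval_mul, eval_add, eval_C, eval_X]
  linear_combination ((2 * n + 1) * cos θ + (2 * n - 1)) * hUn -
    ((2 * n + 3) * cos θ + (2 * n + 1)) * hUn'

theorem sin_succ_mul_nodeAngle (n k : ℕ) :
    sin ((n + 1) * nodeAngle n k) = -(-1) ^ k * cos (nodeAngle n k / 2) := by
  have h : (n + 1) * nodeAngle n k = (nodeAngle n k / 2 - π / 2) + k * π := by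
    unfold nodeAngle; field_simp; ring
  rw [h, sin_add_nat_mul_pi, sin_sub_pi_div_two]
  ring

theorem sin_mul_nodeAngle (n k : ℕ) :
    sin (n * nodeAngle n k) = -(-1) ^ k * cos (nodeAngle n k / 2) := by
  have h : n * nodeAngle n k = -(nodeAngle n k / 2 + π / 2) + k * π := by
    unfold nodeAngle; field_simp; ring
  rw [h, sin_add_nat_mul_pi, sin_neg, sin_add_pi_div_two]
  ring

theorem S2n_eval_cos_nodeAngle_mul_sin (n k : ℕ) :
    (S2n n).eval (cos (nodeAngle n k)) * sin (nodeAngle n k) =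
      (-1) ^ k * (4 * cos (nodeAngle n k / 2) ^ 3) := by
  have hcos : cos (nodeAngle n k) = 2 * cos (nodeAngle n k / 2) ^ 2 - 1 := by
    have h := cos_sq (nodeAngle n k / 2)
    rw [mul_div_cancel₀ _ two_ne_zero] at h
    linarith
  rw [S2n_eval_cos_mul_sin, sin_succ_mul_nodeAngle, sin_mul_nodeAngle, hcos]
  ring

theorem S2n_eval_one (n : ℕ) : (S2n n).eval 1 = 0 := by
  simp only [S2n, eval_sub, eval_mul, eval_add, eval_C, eval_X, U_eval_one]
  push_cast
  ring

theorem S2n_eval_neg_one (n : ℕ) : (S2n n).eval (-1) = (-1) ^ (n + 1) * (4 * n + 2) := by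
  simp only [S2n, eval_sub, eval_mul, eval_add, eval_C, eval_X, U_eval_neg_one, Int.negOnePow_sub,
    Int.negOnePow_one, Units.val_mul, Units.val_neg, Units.val_one, Int.cast_mul, Int.cast_neg,
    Int.cast_one, Int.cast_negOnePow_natCast]
  push_cast
  ring

theorem S2n_natDegree_le (n : ℕ) : (S2n n).natDegree ≤ n + 1 := by
  have hUn : (U ℝ n).natDegree = n := natDegree_U_natCast ℝ n
  have hUn' : (U ℝ (n - 1)).natDegree = n - 1 := by
    rw [natDegree_U]; omega
  unfold S2n
  refine (natDegree_sub_le _ _).trans (max_le ?_ ?_)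
  · exact natDegree_mul_le.trans ((add_le_add natDegree_linear_le hUn.le).trans (by omega))
  · exact natDegree_mul_le.trans ((add_le_add natDegree_linear_le hUn'.le).trans (by omega))

theorem neg_one_pow_mul_S2n_eval_cos_nodeAngle_pos {n k : ℕ} (hk : 1 ≤ k) (hkn : k ≤ n + 1) :
    0 < (-1) ^ k * (S2n n).eval (cos (nodeAngle n k)) := by
  rcases hkn.lt_or_eq with hkn | rfl
  · have hθ := nodeAngle_pos (n := n) hk
    have hθπ := nodeAngle_lt_pi (Nat.le_of_lt_succ hkn)
    have hsin : 0 < sin (nodeAngle n k) := sin_pos_of_pos_of_lt_pi hθ hθπ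
    have hcos : 0 < cos (nodeAngle n k / 2) :=
      cos_pos_of_mem_Ioo ⟨by linarith [pi_pos], by linarith⟩
    refine pos_of_mul_pos_left ?_ hsin.le
    rw [mul_assoc, S2n_eval_cos_nodeAngle_mul_sin, ← mul_assoc, ← mul_pow]
    norm_num
    positivity
  · rw [nodeAngle_succ_self, cos_pi, S2n_eval_neg_one, ← mul_assoc, ← mul_pow]
    norm_num
    positivity

theorem strictAntiOn_of_eq_cos_nodeAngle {n : ℕ} {ξ : ℕ → ℝ} (hξ0 : ξ 0 = 1)
    (hξ : ∀ k, 1 ≤ k → k ≤ n + 1 → ξ k = cos (nodeAngle n k)) :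
    StrictAntiOn ξ (Iic (n + 1)) := by
  have hθ : ∀ k, 1 ≤ k → k ≤ n + 1 → nodeAngle n k ∈ Icc 0 π := fun k hk hkn =>
    ⟨(nodeAngle_pos hk).le,
      ((nodeAngle_strictMono n).monotone hkn).trans_eq (nodeAngle_succ_self n)⟩
  refine strictAntiOn_Iic_of_succ_lt fun k hkn => ?_
  rw [Order.succ_eq_add_one]
  rcases Nat.eq_zero_or_pos k with rfl | hk
  · rw [zero_add, hξ0, hξ 1 le_rfl (by omega), ← cos_zero]
    exact strictAntiOn_cos ⟨le_rfl, pi_pos.le⟩ (hθ 1 le_rfl (by omega)) (nodeAngle_pos le_rfl)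
  · rw [hξ k hk hkn.le, hξ (k + 1) (by omega) hkn]
    exact strictAntiOn_cos (hθ k hk hkn.le) (hθ (k + 1) (by omega) hkn)
      (nodeAngle_strictMono n k.lt_succ_self)

theorem zeroes_of_S_even_general (n : ℕ) (ξ : ℕ → ℝ)
    (hξ0 : ξ 0 = 1) (hξtop : ξ (n + 1) = -1)
    (hξ : ∀ k, 1 ≤ k → k ≤ n → ξ k = Real.cos ((2 * k - 1) * π / (2 * n + 1))) :
    (∀ k, k ≤ n → ξ (k + 1) < ξ k) ∧
    (∀ k, 1 ≤ k → k ≤ n →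
      ∃! x, x ∈ Set.Ioo (ξ (k + 1)) (ξ k) ∧ (S2n n).eval x = 0) ∧
    (∀ x : ℝ, (S2n n).eval x = 0 →
      x = 1 ∨ ∃ k, 1 ≤ k ∧ k ≤ n ∧ x ∈ Set.Ioo (ξ (k + 1)) (ξ k)) ∧
    (∀ x : ℝ, (S2n n).eval x = 0 →
      (Polynomial.derivative (S2n n)).eval x ≠ 0) := by
  have hξ' : ∀ k, 1 ≤ k → k ≤ n + 1 → ξ k = cos (nodeAngle n k) := fun k hk hkn => by
    rcases hkn.lt_or_eq with hkn | rfl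
    · exact hξ k hk (Nat.le_of_lt_succ hkn)
    · rw [hξtop, nodeAngle_succ_self, cos_pi]
  have hanti := strictAntiOn_of_eq_cos_nodeAngle hξ0 hξ'
  have hsign : ∀ k, 1 ≤ k → k ≤ n + 1 → 0 < (-1) ^ k * (S2n n).eval (ξ k) := fun k hk hkn =>
    hξ' k hk hkn ▸ neg_one_pow_mul_S2n_eval_cos_nodeAngle_pos hk hkn
  obtain ⟨hunique, hexhaust, hsimple⟩ := zeroes_interlace_of_sign_alternation
    (S2n_natDegree_le n) hanti (hξ0 ▸ S2n_eval_one n) hsign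
  exact ⟨fun k hkn => hanti (mem_Iic.2 (by omega)) (mem_Iic.2 (by omega)) k.lt_succ_self,
    hunique, fun x hx => hξ0 ▸ hexhaust x hx, hsimple⟩

/-- For `n ≥ 1`, with `ξ₀ = 1`, `ξ_{n+1} = −1`, and
`ξ_k = cos((2k−1)π/(2n+1))` for `1 ≤ k ≤ n`, the `ξ_k` are strictly decreasing,
`S_{2n}` has exactly one zero in each interval `(ξ_{k+1}, ξ_k)` for `1 ≤ k ≤ n`;
these zeroes together with `x = 1` exhaust the zeroes of `S_{2n}`, all of which
are simple. -/
theorem zeroes_of_S_even (n : ℕ) (hn : 1 ≤ n) (ξ : ℕ → ℝ)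
    (hξ0 : ξ 0 = 1) (hξtop : ξ (n + 1) = -1)
    (hξ : ∀ k, 1 ≤ k → k ≤ n → ξ k = Real.cos ((2 * k - 1) * π / (2 * n + 1))) :
    (∀ k, k ≤ n → ξ (k + 1) < ξ k) ∧
    (∀ k, 1 ≤ k → k ≤ n →
      ∃! x, x ∈ Set.Ioo (ξ (k + 1)) (ξ k) ∧ (S2n n).eval x = 0) ∧
    (∀ x : ℝ, (S2n n).eval x = 0 →
      x = 1 ∨ ∃ k, 1 ≤ k ∧ k ≤ n ∧ x ∈ Set.Ioo (ξ (k + 1)) (ξ k)) ∧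
    (∀ x : ℝ, (S2n n).eval x = 0 →
      (Polynomial.derivative (S2n n)).eval x ≠ 0) :=
  zeroes_of_S_even_general n ξ hξ0 hξtop hξ
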